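/- arXiv:2210.13155 — 3 statements merged into one kernel-verified Lean document; each statement's English description precedes it below -/
import Mathlib

section
/- Let K be a field and let e be a nilpotent endomorphism of a finite-dimensional K-vector space V with Jordan block sizes λ_1 ≥ λ_2 ≥ ... ≥ λ_r. Then the centralizer of e in End(V), i.e. {x ∈ End(V) : x∘e = e∘x}, has dimension Σ_{i=1}^r Σ_{j=1}^r min(λ_i, λ_j). -/
/-!
An endomorphism commuting with `e` is determined by the images of the chain generators `v i`,
and these may be chosen freely in `ker (e ^ λ_i)`; hence the centralizer is isomorphic to
`Π i, ker (e ^ λ_i)`. Since `e ^ n` shifts every Jordan chain by `n`, its range is spanned by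
`Σ_j (λ_j - n)` of the basis vectors, so by rank–nullity `dim ker (e ^ n) = Σ_j min λ_j n`.
-/

open Module Submodule

structure IsJordanBasis {K V : Type*} [Field K] [AddCommGroup V] [Module K V]
    (e : Module.End K V) {r : ℕ} {lam : Fin r → ℕ} (v : Fin r → V)
    (b : Basis (Σ i : Fin r, Fin (lam i)) K V) : Prop where
  basis_eq : ∀ (i : Fin r) (k : Fin (lam i)), b ⟨i, k⟩ = (e ^ (k : ℕ)) (v i)
  pow_apply_eq_zero : ∀ i : Fin r, (e ^ lam i) (v i) = 0

lemma Module.End.apply_pow_apply_of_mem_centralizer {K V : Type*} [Field K] [AddCommGroup V]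
    [Module K V] {e x : Module.End K V} (hx : x ∈ Subalgebra.centralizer K {e}) (n : ℕ)
    (w : V) : x ((e ^ n) w) = (e ^ n) (x w) := by
  have hcomm : Commute e x := (Subalgebra.mem_centralizer_iff K).mp hx e rfl
  exact (LinearMap.congr_fun (hcomm.pow_left n) w).symm

noncomputable def centralizerToKerPow {K V : Type*} [Field K] [AddCommGroup V] [Module K V]
    {e : Module.End K V} {r : ℕ} {lam : Fin r → ℕ} {v : Fin r → V}
    (hv : ∀ i, (e ^ lam i) (v i) = 0) :
    Subalgebra.centralizer K {e} →ₗ[K] Π i, LinearMap.ker (e ^ lam i) where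
  toFun x i := ⟨x.1 (v i), by
    rw [LinearMap.mem_ker, ← Module.End.apply_pow_apply_of_mem_centralizer x.2, hv, map_zero]⟩
  map_add' _ _ := rfl
  map_smul' _ _ := rfl

namespace IsJordanBasis

variable {K V : Type*} [Field K] [AddCommGroup V] [Module K V] {e : Module.End K V} {r : ℕ}
  {lam : Fin r → ℕ} {v : Fin r → V} {b : Basis (Σ i : Fin r, Fin (lam i)) K V}

lemma pow_apply (hJ : IsJordanBasis e v b) (i : Fin r) (m : ℕ) :
    (e ^ m) (v i) = if h : m < lam i then b ⟨i, ⟨m, h⟩⟩ else 0 := by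
  split_ifs with h
  · exact (hJ.basis_eq i ⟨m, h⟩).symm
  · rw [show m = (m - lam i) + lam i by omega, pow_add, Module.End.mul_apply,
      hJ.pow_apply_eq_zero, map_zero]

noncomputable def shiftedBasisFamily (b : Basis (Σ i : Fin r, Fin (lam i)) K V) (n : ℕ) :
    (Σ i : Fin r, Fin (lam i - n)) → V :=
  b ∘ Sigma.map id fun _ k => ⟨k + n, Nat.add_lt_of_lt_sub k.isLt⟩

lemma range_pow (hJ : IsJordanBasis e v b) (n : ℕ) :
    LinearMap.range (e ^ n) = span K (Set.range (shiftedBasisFamily b n)) := by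
  apply le_antisymm
  · rw [LinearMap.range_eq_map, ← b.span_eq, map_span, span_le]
    rintro - ⟨-, ⟨⟨i, k⟩, rfl⟩, rfl⟩
    rw [hJ.basis_eq, ← Module.End.mul_apply, ← pow_add, hJ.pow_apply]
    split_ifs with h
    · exact subset_span ⟨⟨i, ⟨k, by omega⟩⟩, by simp [shiftedBasisFamily, Sigma.map, add_comm]⟩
    · exact zero_mem _
  · rw [span_le]
    rintro - ⟨⟨i, k⟩, rfl⟩
    refine ⟨(e ^ (k : ℕ)) (v i), ?_⟩
    simp only [shiftedBasisFamily, Function.comp_apply, Sigma.map, hJ.basis_eq,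
      ← Module.End.mul_apply, ← pow_add, add_comm, id]

lemma finrank_ker_pow (hJ : IsJordanBasis e v b) (n : ℕ) :
    finrank K (LinearMap.ker (e ^ n)) = ∑ i, min (lam i) n := by
  have := Module.Finite.of_basis b
  have hrange : finrank K (LinearMap.range (e ^ n)) = ∑ i, (lam i - n) := by
    have hli : LinearIndependent K (shiftedBasisFamily b n) :=
      b.linearIndependent.comp _ (Function.injective_id.sigma_map fun _ _ _ h => by
        simpa [Fin.ext_iff] using h)
    rw [hJ.range_pow, finrank_span_eq_card hli]
    simp
  have hdim : finrank K V = ∑ i, lam i := by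
    simp [finrank_eq_card_basis b]
  have hsplit : ∑ i, lam i = ∑ i, min (lam i) n + ∑ i, (lam i - n) := by
    rw [← Finset.sum_add_distrib]
    exact Finset.sum_congr rfl fun i _ => by omega
  have := LinearMap.finrank_range_add_finrank_ker (e ^ n)
  omega

lemma injective_centralizerToKerPow (hJ : IsJordanBasis e v b) :
    Function.Injective (centralizerToKerPow hJ.pow_apply_eq_zero) := by
  intro x y hxy
  refine Subtype.ext (b.ext fun ⟨i, k⟩ => ?_)
  have hi : x.1 (v i) = y.1 (v i) := congrArg Subtype.val (congrFun hxy i)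
  rw [hJ.basis_eq, Module.End.apply_pow_apply_of_mem_centralizer x.2,
    Module.End.apply_pow_apply_of_mem_centralizer y.2, hi]

lemma constr_pow_apply (hJ : IsJordanBasis e v b) {w : Fin r → V}
    (hw : ∀ i, (e ^ lam i) (w i) = 0) (i : Fin r) (n : ℕ) :
    b.constr K (fun p => (e ^ (p.2 : ℕ)) (w p.1)) ((e ^ n) (v i)) = (e ^ n) (w i) := by
  rw [hJ.pow_apply]
  split_ifs with h
  · exact b.constr_basis K _ _
  · rw [map_zero, show n = (n - lam i) + lam i by omega, pow_add, Module.End.mul_apply, hw,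
      map_zero]

lemma surjective_centralizerToKerPow (hJ : IsJordanBasis e v b) :
    Function.Surjective (centralizerToKerPow hJ.pow_apply_eq_zero) := by
  intro w
  have hw : ∀ i, (e ^ lam i) (w i : V) = 0 := fun i => (w i).2
  set f := b.constr K (fun p => (e ^ (p.2 : ℕ)) (w p.1 : V))
  have hf : f ∈ Subalgebra.centralizer K {e} := by
    rw [Subalgebra.mem_centralizer_iff]
    simp only [Set.mem_singleton_iff, forall_eq]
    refine b.ext fun ⟨i, k⟩ => ?_
    rw [Module.End.mul_apply, Module.End.mul_apply, hJ.basis_eq, hJ.constr_pow_apply hw,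
      ← Module.End.mul_apply, ← pow_succ', ← Module.End.mul_apply e, ← pow_succ',
      hJ.constr_pow_apply hw]
  refine ⟨⟨f, hf⟩, funext fun i => Subtype.ext ?_⟩
  show f (v i) = w i
  simpa only [pow_zero, Module.End.one_apply] using hJ.constr_pow_apply hw i 0

end IsJordanBasis

theorem stmt_0_general (K : Type*) [Field K] (V : Type*) [AddCommGroup V] [Module K V]
    (e : Module.End K V) (r : ℕ) (lam : Fin r → ℕ) (v : Fin r → V)
    (b : Module.Basis (Σ i : Fin r, Fin (lam i)) K V)
    (hb : ∀ (i : Fin r) (k : Fin (lam i)), b ⟨i, k⟩ = (e ^ (k : ℕ)) (v i))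
    (hzero : ∀ i : Fin r, (e ^ lam i) (v i) = 0) :
    Module.finrank K (Subalgebra.centralizer K {e} : Subalgebra K (Module.End K V)) =
      ∑ i : Fin r, ∑ j : Fin r, min (lam i) (lam j) := by
  have hJ : IsJordanBasis e v b := ⟨hb, hzero⟩
  have := Module.Finite.of_basis b
  rw [(LinearEquiv.ofBijective _ ⟨hJ.injective_centralizerToKerPow,
    hJ.surjective_centralizerToKerPow⟩).finrank_eq, Module.finrank_pi_fintype]
  refine Finset.sum_congr rfl fun i _ => ?_
  rw [hJ.finrank_ker_pow]
  exact Finset.sum_congr rfl fun j _ => min_comm _ _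

/-- The centralizer of a nilpotent endomorphism with Jordan block sizes
`λ_1 ≥ ... ≥ λ_r` has dimension `Σ_i Σ_j min (λ_i) (λ_j)`. -/
theorem stmt_0 (K : Type*) [Field K] (V : Type*) [AddCommGroup V] [Module K V]
    [FiniteDimensional K V] (e : Module.End K V) (r : ℕ) (lam : Fin r → ℕ)
    (hanti : Antitone lam) (v : Fin r → V)
    (b : Module.Basis (Σ i : Fin r, Fin (lam i)) K V)
    (hb : ∀ (i : Fin r) (k : Fin (lam i)), b ⟨i, k⟩ = (e ^ (k : ℕ)) (v i))
    (hzero : ∀ i : Fin r, (e ^ lam i) (v i) = 0) :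
    Module.finrank K (Subalgebra.centralizer K {e} : Subalgebra K (Module.End K V)) =
      ∑ i : Fin r, ∑ j : Fin r, min (lam i) (lam j) :=
  stmt_0_general K V e r lam v b hb hzero
end

section
/- Let K be an algebraically closed field and e a nilpotent N×N matrix over K whose largest Jordan block has size λ_1. Then the centre of the centralizer of e in gl_N(K), namely {x : [x,y] = 0 for all y with [e,y] = 0}, equals the linear span of I, e, e^2, ..., e^{λ_1 − 1}, and in particular has dimension λ_1. -/
/-!
Let `f` be nilpotent of index `n` on a vector space `V`, and pick `v ∈ V` and a functional `α`
with `α (f ^ (n - 1) v) ≠ 0`. For `w ∈ V` let `r_w z = α z • w` and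
`T w = ∑ j < n, f ^ j r_w f ^ (n - 1 - j)`. Then `T w` commutes with `f`, since `f T w - T w f`
telescopes to `f ^ n r_w - r_w f ^ n = 0`, and `T w z = q_z(f) w` with
`q_z = ∑ j < n, α (f ^ (n - 1 - j) z) X ^ j`. If `x` commutes with every `T w`, evaluating at `v`
gives `x q_v(f) = q_{x v}(f)`; the constant term of `q_v` is nonzero, so `q_v(f)` is a unit of
`K[f]` and `x ∈ K[f]`. Finally, `e ^ n = 0 ≠ e ^ (n - 1)` forces the minimal polynomial of
`e` to be `X ^ n`, so `1, e, …, e ^ (n - 1)` is a basis of `K[e]`.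
-/

open Polynomial

section PowersOfNilpotent

variable {K A : Type*} [Field K] [Ring A] [Algebra K A] {e : A} {n : ℕ}

open scoped IsMulCommutative in
theorem exists_mem_adjoin_mul_aeval_eq_one (he : IsNilpotent e) {p : K[X]} (hp : p.coeff 0 ≠ 0) :
    ∃ g ∈ Algebra.adjoin K {e}, aeval e p * g = 1 := by
  set e' : Algebra.adjoin K {e} := ⟨e, Algebra.self_mem_adjoin_singleton K e⟩
  have he' : IsNilpotent e' := by
    obtain ⟨n, hn⟩ := he
    exact ⟨n, Subtype.ext (by simpa using hn)⟩
  have hunit : IsUnit (aeval e' p) := by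
    refine isUnit_aeval_of_isUnit_aeval_of_isNilpotent_sub (b := 0) ?_ (by simpa using he')
    rw [← coeff_zero_eq_aeval_zero']
    exact hp.isUnit.map _
  obtain ⟨u, hu⟩ := hunit
  refine ⟨(↑u⁻¹ : Algebra.adjoin K {e}), SetLike.coe_mem _, ?_⟩
  rw [show aeval e p = ↑(aeval e' p) from (aeval_subalgebra_coe p _ e').symm, ← hu,
    ← Subalgebra.coe_mul, Units.mul_inv, Subalgebra.coe_one]

theorem minpoly_eq_X_pow_of_pow_eq_zero (he : e ^ n = 0) (he' : e ^ (n - 1) ≠ 0) :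
    minpoly K e = X ^ n := by
  have hint : IsIntegral K e := ⟨X ^ n, monic_X_pow n, by simp [he]⟩
  obtain ⟨i, hin, hassoc⟩ := (dvd_prime_pow prime_X n).1 (minpoly.dvd K e (by simp [he]))
  have hmin : minpoly K e = X ^ i :=
    eq_of_monic_of_associated (minpoly.monic hint) (monic_X_pow i) hassoc
  obtain rfl | hlt := hin.eq_or_lt
  · exact hmin
  · have hei : e ^ i = 0 := by simpa [hmin] using minpoly.aeval K e
    refine absurd ?_ he'
    rw [← Nat.sub_add_cancel (Nat.le_sub_one_of_lt hlt), pow_add, hei, mul_zero]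

theorem finrank_span_range_pow (he : e ^ n = 0) (he' : e ^ (n - 1) ≠ 0) :
    Module.finrank K (Submodule.span K (Set.range fun k : Fin n => e ^ (k : ℕ))) = n := by
  have hli := linearIndependent_pow (K := K) e
  rw [minpoly_eq_X_pow_of_pow_eq_zero he he', natDegree_X_pow] at hli
  rw [finrank_span_eq_card hli, Fintype.card_fin]

theorem span_range_pow_eq_adjoin (he : e ^ n = 0) :
    Submodule.span K (Set.range fun k : Fin n => e ^ (k : ℕ)) =
      Subalgebra.toSubmodule (Algebra.adjoin K {e}) := by
  ext y
  rw [PowerBasis.mem_span_pow', Subalgebra.mem_toSubmodule,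
    Algebra.adjoin_singleton_eq_range_aeval, AlgHom.mem_range]
  constructor
  · rintro ⟨p, -, rfl⟩
    exact ⟨p, rfl⟩
  · rintro ⟨p, rfl⟩
    refine ⟨p %ₘ X ^ n, ?_, (aeval_modByMonic_eq_self_of_root (by simp [he])).symm⟩
    simpa using degree_modByMonic_lt p (monic_X_pow n)

end PowersOfNilpotent

theorem Commute.sum_pow_mul_mul_pow_of_pow_eq_zero {R : Type*} [Ring R] {e : R} {n : ℕ}
    (he : e ^ n = 0) (a : R) :
    Commute e (∑ j ∈ Finset.range n, e ^ j * a * e ^ (n - 1 - j)) := by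
  set g : ℕ → R := fun j => e ^ j * a * e ^ (n - j)
  have hleft : e * ∑ j ∈ Finset.range n, e ^ j * a * e ^ (n - 1 - j) =
      ∑ j ∈ Finset.range n, g (j + 1) := by
    rw [Finset.mul_sum]
    refine Finset.sum_congr rfl fun j hj => ?_
    rw [Finset.mem_range] at hj
    simp only [g, ← mul_assoc, ← pow_succ', Nat.sub_sub, add_comm 1 j]
  have hright : (∑ j ∈ Finset.range n, e ^ j * a * e ^ (n - 1 - j)) * e =
      ∑ j ∈ Finset.range n, g j := by
    rw [Finset.sum_mul]
    refine Finset.sum_congr rfl fun j hj => ?_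
    rw [Finset.mem_range] at hj
    simp only [g, mul_assoc, ← pow_succ]
    congr 3
    omega
  rw [Commute, SemiconjBy, hleft, hright, ← sub_eq_zero, ← Finset.sum_sub_distrib,
    Finset.sum_range_sub]
  simp [g, he]

namespace Module.End

variable {K V : Type*} [Field K] [AddCommGroup V] [Module K V]

noncomputable def orbitPoly (f : Module.End K V) (α : Module.Dual K V) (n : ℕ) (z : V) : K[X] :=
  ∑ j ∈ Finset.range n, monomial j (α ((f ^ (n - 1 - j)) z))

variable {f : Module.End K V} {α : Module.Dual K V} {n : ℕ}

theorem coeff_zero_orbitPoly (hn : 0 < n) (z : V) :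
    (orbitPoly f α n z).coeff 0 = α ((f ^ (n - 1)) z) := by
  simp [orbitPoly, coeff_monomial, hn]

theorem sum_pow_mul_smulRight_mul_pow_apply (w z : V) :
    (∑ j ∈ Finset.range n, f ^ j * α.smulRight w * f ^ (n - 1 - j)) z =
      aeval f (orbitPoly f α n z) w := by
  simp [orbitPoly, LinearMap.sum_apply, aeval_monomial, Module.End.mul_apply]

theorem mul_aeval_orbitPoly_of_mem_centralizer_centralizer (hf : f ^ n = 0)
    {x : Module.End K V} (hx : x ∈ Set.centralizer (Set.centralizer {f})) (v : V) :
    x * aeval f (orbitPoly f α n v) = aeval f (orbitPoly f α n (x v)) := by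
  ext w
  have hcomm : (∑ j ∈ Finset.range n, f ^ j * α.smulRight w * f ^ (n - 1 - j)) * x =
      x * ∑ j ∈ Finset.range n, f ^ j * α.smulRight w * f ^ (n - 1 - j) :=
    hx _ <| Set.mem_centralizer_iff.2 fun _ hg =>
      hg ▸ (Commute.sum_pow_mul_mul_pow_of_pow_eq_zero hf _).eq
  simpa only [Module.End.mul_apply, sum_pow_mul_smulRight_mul_pow_apply] using
    (LinearMap.congr_fun hcomm v).symm

theorem mem_adjoin_of_mem_centralizer_centralizer (hf : f ^ n = 0) {v : V}
    (hv : α ((f ^ (n - 1)) v) ≠ 0) {x : Module.End K V}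
    (hx : x ∈ Set.centralizer (Set.centralizer {f})) : x ∈ Algebra.adjoin K {f} := by
  have hn : 0 < n := Nat.pos_of_ne_zero fun h => hv (by subst h; simp_all)
  obtain ⟨g, hg, hinv⟩ := exists_mem_adjoin_mul_aeval_eq_one ⟨n, hf⟩
    (p := orbitPoly f α n v) (by rwa [coeff_zero_orbitPoly hn])
  have hx' : x = aeval f (orbitPoly f α n (x v)) * g := by
    rw [← mul_aeval_orbitPoly_of_mem_centralizer_centralizer hf hx, mul_assoc, hinv, mul_one]
  rw [hx']
  exact Subalgebra.mul_mem _ (Algebra.adjoin_singleton_eq_range_aeval K f ▸ ⟨_, rfl⟩) hg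

theorem centralizer_centralizer_eq_adjoin (hf : IsNilpotent f) :
    Set.centralizer (Set.centralizer {f}) = Algebra.adjoin K {f} := by
  refine subset_antisymm (fun x hx => ?_) (Algebra.adjoin_le_centralizer_centralizer K {f})
  nontriviality Module.End K V
  obtain ⟨v, hv⟩ : ∃ v, (f ^ (nilpotencyClass f - 1)) v ≠ 0 := by
    by_contra! h
    exact pow_pred_nilpotencyClass hf (LinearMap.ext h)
  obtain ⟨α, hα⟩ : ∃ α : Module.Dual K V, α ((f ^ (nilpotencyClass f - 1)) v) ≠ 0 := by
    by_contra! h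
    exact hv ((Module.forall_dual_apply_eq_zero_iff K _).1 h)
  exact mem_adjoin_of_mem_centralizer_centralizer (pow_nilpotencyClass hf) hα hx

end Module.End

theorem Set.centralizer_image {M N F : Type*} [Mul M] [Mul N] [EquivLike F M N]
    [MulEquivClass F M N] (φ : F) (s : Set M) :
    Set.centralizer (φ '' s) = φ '' Set.centralizer s := by
  ext y
  obtain ⟨x, rfl⟩ := EquivLike.surjective φ y
  simp only [Set.mem_centralizer_iff, Set.forall_mem_image, (EquivLike.injective φ).mem_set_image,
    ← map_mul, (EquivLike.injective φ).eq_iff]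

theorem Matrix.centralizer_centralizer_eq_adjoin {K ι : Type*} [Field K] [Fintype ι]
    [DecidableEq ι] {e : Matrix ι ι K} (he : IsNilpotent e) :
    Set.centralizer (Set.centralizer {e}) = Algebra.adjoin K {e} := by
  let φ : Matrix ι ι K ≃ₐ[K] Module.End K (ι → K) := Matrix.toLinAlgEquiv'
  have h := Module.End.centralizer_centralizer_eq_adjoin (he.map φ)
  rw [← Set.image_singleton, Set.centralizer_image, Set.centralizer_image,
    ← AlgEquiv.coe_toAlgHom, Algebra.adjoin_image, Subalgebra.coe_map] at h
  exact Set.image_injective.2 φ.injective h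

theorem stmt_2_general (K : Type*) [Field K] (N lam1 : ℕ)
    (e : Matrix (Fin N) (Fin N) K)
    (h1 : e ^ lam1 = 0) (h2 : e ^ (lam1 - 1) ≠ 0) :
    Set.centralizer (Set.centralizer {e}) =
      ↑(Submodule.span K (Set.range fun k : Fin lam1 => e ^ (k : ℕ))) ∧
    Module.finrank K
      (Submodule.span K (Set.range fun k : Fin lam1 => e ^ (k : ℕ))) = lam1 := by
  refine ⟨?_, finrank_span_range_pow h1 h2⟩
  rw [span_range_pow_eq_adjoin h1, Subalgebra.coe_toSubmodule]
  exact Matrix.centralizer_centralizer_eq_adjoin ⟨lam1, h1⟩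

/-- The centre of the centralizer of a nilpotent matrix `e` with largest Jordan
block of size `λ₁` (equivalently, nilpotency index `λ₁`) is the span of
`I, e, ..., e^(λ₁-1)`, of dimension `λ₁`. -/
theorem stmt_2 (K : Type*) [Field K] [IsAlgClosed K] (N lam1 : ℕ)
    (e : Matrix (Fin N) (Fin N) K)
    (h1 : e ^ lam1 = 0) (h2 : e ^ (lam1 - 1) ≠ 0) :
    Set.centralizer (Set.centralizer {e}) =
      ↑(Submodule.span K (Set.range fun k : Fin lam1 => e ^ (k : ℕ))) ∧
    Module.finrank K
      (Submodule.span K (Set.range fun k : Fin lam1 => e ^ (k : ℕ))) = lam1 :=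
  stmt_2_general K N lam1 e h1 h2
end

section
/- Let K be an algebraically closed field of characteristic p with p ∤ n, let φ : sl(n|n) → psl(n|n) = sl(n|n)/K·I be the quotient map, and let e ∈ sl(n|n)_0̄ be nilpotent. If x ∈ sl(n|n) satisfies [e, x] ∈ K·I_{2n}, then [e, x] = 0. Consequently φ restricts to a surjection sl(n|n)^e → psl(n|n)^{φ(e)} with kernel K·I, so dim psl(n|n)^{φ(e)} = dim sl(n|n)^e − 1. -/
open Matrix

/-- `gl(n|n)` as matrices indexed by `Fin n ⊕ Fin n`. -/
abbrev glnn (K : Type*) [Field K] (n : ℕ) :=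
  Matrix (Fin n ⊕ Fin n) (Fin n ⊕ Fin n) K

/-- The supertrace on `gl(n|n)` as a linear map: `str x = tr (J x)` where
`J = diag(I, -I)`. -/
noncomputable def strL (K : Type*) [Field K] (n : ℕ) : glnn K n →ₗ[K] K :=
  (Matrix.traceLinearMap (Fin n ⊕ Fin n) K K).comp
    (LinearMap.mulLeft K
      (Matrix.fromBlocks (1 : Matrix (Fin n) (Fin n) K) 0 0
        (-1 : Matrix (Fin n) (Fin n) K)))

/-- `ad e = [e, ·]` as a linear map (the super bracket with the even element
`e` is the ordinary commutator). -/
noncomputable def adL {K : Type*} [Field K] {n : ℕ} (e : glnn K n) :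
    glnn K n →ₗ[K] glnn K n :=
  LinearMap.mulLeft K e - LinearMap.mulRight K e

/-!
Let `P = diag(I, 0)` be the projection onto the first block. A block-diagonal `e` commutes with `P`,
so `tr (P [e, x]) = 0` for every `x`, whereas `tr (P (c • I)) = c n`. When `p ∤ n` this forces
`[e, x] = 0` as soon as `[e, x] ∈ K·I`. Hence the preimage of `K·I` under `ad e` is the
centraliser itself; it contains `K·I` (the supertrace of `I` is `n - n = 0`), and the dimension
formula is rank–nullity for the quotient map restricted to `sl(n|n)^e`.
-/

namespace Matrix

variable {R m o : Type*} [Fintype m] [Fintype o]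

theorem trace_fromBlocks [AddCommMonoid R] (A : Matrix m m R) (B : Matrix m o R)
    (C : Matrix o m R) (D : Matrix o o R) :
    trace (fromBlocks A B C D) = trace A + trace D := by
  simp [trace, Fintype.sum_sum_type]

theorem trace_mul_commutator_eq_zero_of_commute [CommRing R]
    {P e : Matrix m m R} (h : Commute P e) (x : Matrix m m R) :
    trace (P * (e * x - x * e)) = 0 := by
  rw [Matrix.mul_sub, trace_sub, ← Matrix.mul_assoc, h.eq, Matrix.mul_assoc,
    trace_mul_comm e, Matrix.mul_assoc, sub_self]

theorem commute_fromBlocks_one_zero_of_toBlocks_eq_zero [Semiring R] [DecidableEq m]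
    {e : Matrix (m ⊕ o) (m ⊕ o) R} (h₁₂ : e.toBlocks₁₂ = 0) (h₂₁ : e.toBlocks₂₁ = 0) :
    Commute (fromBlocks 1 0 0 0) e := by
  rw [← fromBlocks_toBlocks e, h₁₂, h₂₁]
  simp [Commute, SemiconjBy, fromBlocks_multiply]

theorem commutator_eq_zero_of_eq_smul_one [Field K] [DecidableEq m] [DecidableEq o]
    (hm : (Fintype.card m : K) ≠ 0) {e : Matrix (m ⊕ o) (m ⊕ o) K}
    (h₁₂ : e.toBlocks₁₂ = 0) (h₂₁ : e.toBlocks₂₁ = 0) {x : Matrix (m ⊕ o) (m ⊕ o) K} {c : K}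
    (hc : e * x - x * e = c • 1) : e * x - x * e = 0 := by
  have htr := trace_mul_commutator_eq_zero_of_commute
    (commute_fromBlocks_one_zero_of_toBlocks_eq_zero h₁₂ h₂₁) x
  rw [hc, Matrix.mul_smul, Matrix.mul_one, trace_smul, trace_fromBlocks, trace_one,
    trace_zero, add_zero, smul_eq_mul, mul_eq_zero] at htr
  rw [hc, htr.resolve_right hm, zero_smul]

end Matrix

namespace Submodule

variable {K M : Type*} [Field K] [AddCommGroup M] [Module K M]

theorem finrank_comap_subtype (p q : Submodule K M) :
    Module.finrank K (q.comap p.subtype) = Module.finrank K (p ⊓ q : Submodule K M) := by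
  rw [← map_comap_subtype, finrank_map_subtype_eq]

theorem finrank_map_mkQ_of_le {Z C : Submodule K M} [FiniteDimensional K C] (h : Z ≤ C) :
    Module.finrank K (C.map Z.mkQ) = Module.finrank K C - Module.finrank K Z := by
  have hrn := (Z.mkQ.domRestrict C).finrank_range_add_finrank_ker
  rw [LinearMap.range_domRestrict, LinearMap.ker_domRestrict, ker_mkQ, finrank_comap_subtype,
    inf_eq_right.mpr h] at hrn
  omega

theorem comap_eq_ker_of_forall_map_mem {M' : Type*} [AddCommGroup M'] [Module K M']
    (f : M →ₗ[K] M') (L : Submodule K M') (hf : ∀ x, f x ∈ L → f x = 0) :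
    L.comap f = LinearMap.ker f :=
  le_antisymm (fun x hx => hf x hx) (fun x hx => by simp [LinearMap.mem_ker.mp hx])

theorem finrank_map_mkQ_comap_comap [FiniteDimensional K M] (S L : Submodule K M)
    (f : M →ₗ[K] M) (hLS : L ≤ S) (hLf : L ≤ LinearMap.ker f) (hf : ∀ x, f x ∈ L → f x = 0) :
    Module.finrank K (((L.comap f).comap S.subtype).map (L.comap S.subtype).mkQ) =
      Module.finrank K (S ⊓ LinearMap.ker f : Submodule K M) - Module.finrank K L := by
  rw [comap_eq_ker_of_forall_map_mem f L hf, finrank_map_mkQ_of_le, finrank_comap_subtype,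
    finrank_comap_subtype, inf_eq_right.mpr hLS]
  exact comap_mono hLf

end Submodule

theorem strL_one (K : Type*) [Field K] (n : ℕ) : strL K n 1 = 0 := by
  simp [strL, Matrix.trace_fromBlocks]

theorem stmt_8_general (K : Type*) [Field K] (n : ℕ)
    (hp : ¬ (ringChar K ∣ n))
    (e : glnn K n)
    (heven : e.toBlocks₁₂ = 0 ∧ e.toBlocks₂₁ = 0) :
    (∀ x : glnn K n, strL K n x = 0 →
      adL e x ∈ Submodule.span K {(1 : glnn K n)} → adL e x = 0) ∧
    Module.finrank K
      (Submodule.map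
        (Submodule.comap (LinearMap.ker (strL K n)).subtype
          (Submodule.span K {(1 : glnn K n)})).mkQ
        (Submodule.comap (LinearMap.ker (strL K n)).subtype
          (Submodule.comap (adL e) (Submodule.span K {(1 : glnn K n)})))) =
      Module.finrank K
        (LinearMap.ker (strL K n) ⊓ LinearMap.ker (adL e) : Submodule K (glnn K n))
        - 1 := by
  have hn : (n : K) ≠ 0 := fun h => hp ((CharP.cast_eq_zero_iff K (ringChar K) n).mp h)
  have hcomm (x : glnn K n) (hx : adL e x ∈ Submodule.span K {1}) : adL e x = 0 := by
    obtain ⟨c, hc⟩ := Submodule.mem_span_singleton.mp hx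
    exact Matrix.commutator_eq_zero_of_eq_smul_one (by simpa using hn) heven.1 heven.2 hc.symm
  have : Nonempty (Fin n) := ⟨⟨0, Nat.pos_of_ne_zero (by rintro rfl; simp at hn)⟩⟩
  refine ⟨fun x _ => hcomm x, ?_⟩
  rw [Submodule.finrank_map_mkQ_comap_comap _ _ _ ?_ ?_ hcomm, finrank_span_singleton one_ne_zero]
  · simpa [Submodule.span_le] using strL_one K n
  · simp [Submodule.span_le, adL]

/-- If `p ∤ n` and `e` is an even nilpotent element of `sl(n|n)`, then any
`x ∈ sl(n|n)` with `[e,x] ∈ K·I` satisfies `[e,x] = 0`; consequently the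
quotient map `φ : sl(n|n) → psl(n|n) = sl(n|n)/K·I` restricts to a surjection
of centralizers with kernel `K·I`, so that the centralizer of `φ(e)` in
`psl(n|n)` has dimension `dim sl(n|n)^e - 1`. -/
theorem stmt_8 (K : Type*) [Field K] [IsAlgClosed K] (n : ℕ) (hn : 0 < n)
    (hp : ¬ (ringChar K ∣ n))
    (e : glnn K n)
    (heven : e.toBlocks₁₂ = 0 ∧ e.toBlocks₂₁ = 0)
    (hnil : IsNilpotent e) (hsl : strL K n e = 0) :
    (∀ x : glnn K n, strL K n x = 0 →
      adL e x ∈ Submodule.span K {(1 : glnn K n)} → adL e x = 0) ∧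
    Module.finrank K
      (Submodule.map
        (Submodule.comap (LinearMap.ker (strL K n)).subtype
          (Submodule.span K {(1 : glnn K n)})).mkQ
        (Submodule.comap (LinearMap.ker (strL K n)).subtype
          (Submodule.comap (adL e) (Submodule.span K {(1 : glnn K n)})))) =
      Module.finrank K
        (LinearMap.ker (strL K n) ⊓ LinearMap.ker (adL e) : Submodule K (glnn K n))
        - 1 :=
  stmt_8_general K n hp e heven
end
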